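/- arXiv:2207.05516 — 8 statements merged into one kernel-verified Lean document; each statement's English description precedes it below -/
import Mathlib

section
/- Let γ be a type, let x, y : ℕ → γ be sequences, let X, Y be positive integers such that x is X-periodic (x_{k+X} = x_k for all k) and y is Y-periodic (y_{k+Y} = y_k for all k), and let z = gcd(X, Y). Then the multiset of pairs { (x_k, y_k) : k = 1, …, X·Y/z } equals the multiset { (x_i, y_j) : 1 ≤ i ≤ X, 1 ≤ j ≤ Y, i ≡ j (mod z) }; in particular each pairing of an element of one period of x with an element of one period of y whose indices lie in the same residue class modulo z occurs exactly once. -/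
/-!
Index the pairs by `k ↦ (k mod X, k mod Y)`, shifted to the representatives `1, …, X` and
`1, …, Y`. By periodicity this map turns `(x_k, y_k)` into `(x_i, y_j)`. By the Chinese remainder
theorem for non-coprime moduli it is a bijection from `1, …, lcm X Y` onto the index pairs
`(i, j)` with `i ≡ j (mod gcd X Y)`, and `X * Y / gcd X Y` is by definition `lcm X Y`.
-/

open Finset Function

theorem Function.Periodic.map_pred_mod_add_one {α : Type*} {f : ℕ → α} {a : ℕ}
    (hf : Periodic f a) {n : ℕ} (hn : 1 ≤ n) : f ((n - 1) % a + 1) = f n := by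
  simpa only [Nat.sub_add_cancel hn] using (hf.add_const 1).map_mod_nat (n - 1)

def residuePair (X Y k : ℕ) : ℕ × ℕ := ((k - 1) % X + 1, (k - 1) % Y + 1)

section

variable {X Y : ℕ}

theorem residuePair_injOn : Set.InjOn (residuePair X Y) (Icc 1 (Nat.lcm X Y)) := by
  intro a ha b hb hab
  simp only [coe_Icc, Set.mem_Icc] at ha hb
  simp only [residuePair, Prod.mk.injEq, add_left_inj] at hab
  have hL : a - 1 ≡ b - 1 [MOD Nat.lcm X Y] := Nat.mod_lcm hab.1 hab.2
  have := hL.eq_of_lt_of_lt (by omega) (by omega)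
  omega

theorem image_residuePair_Icc_lcm (hX : 0 < X) (hY : 0 < Y) :
    (Icc 1 (Nat.lcm X Y)).image (residuePair X Y) =
      (Icc 1 X ×ˢ Icc 1 Y).filter (fun p => p.1 % Nat.gcd X Y = p.2 % Nat.gcd X Y) := by
  ext ⟨i, j⟩
  simp only [mem_image, mem_filter, mem_product, mem_Icc, residuePair, Prod.mk.injEq]
  constructor
  · rintro ⟨k, -, rfl, rfl⟩
    have hi : (k - 1) % X + 1 ≡ k - 1 + 1 [MOD Nat.gcd X Y] :=
      Nat.ModEq.add_right 1 (Nat.mod_mod_of_dvd (k - 1) (Nat.gcd_dvd_left X Y))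
    have hj : (k - 1) % Y + 1 ≡ k - 1 + 1 [MOD Nat.gcd X Y] :=
      Nat.ModEq.add_right 1 (Nat.mod_mod_of_dvd (k - 1) (Nat.gcd_dvd_right X Y))
    exact ⟨⟨⟨by omega, Nat.mod_lt _ hX⟩, ⟨by omega, Nat.mod_lt _ hY⟩⟩, hi.trans hj.symm⟩
  · rintro ⟨⟨⟨hi₁, hiX⟩, ⟨hj₁, hjY⟩⟩, hij⟩
    have hij' : i - 1 ≡ j - 1 [MOD Nat.gcd X Y] :=
      Nat.ModEq.add_right_cancel' 1 (by rwa [Nat.sub_add_cancel hi₁, Nat.sub_add_cancel hj₁])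
    set k := Nat.chineseRemainder' hij'
    have hkL : (k : ℕ) < Nat.lcm X Y := Nat.chineseRemainder'_lt_lcm hij' hX.ne' hY.ne'
    have hkX : (k : ℕ) % X = i - 1 := Eq.trans k.2.1 (Nat.mod_eq_of_lt (by omega))
    have hkY : (k : ℕ) % Y = j - 1 := Eq.trans k.2.2 (Nat.mod_eq_of_lt (by omega))
    exact ⟨k + 1, ⟨by omega, hkL⟩, by simp only [Nat.add_sub_cancel, hkX]; omega,
      by simp only [Nat.add_sub_cancel, hkY]; omega⟩

end

/-- Lemma 2: for an `X`-periodic sequence `x` and a `Y`-periodic sequence `y`,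
over `X·Y/gcd(X,Y)` consecutive steps, the multiset of pairs `(x_k, y_k)` equals
the multiset of all pairings `(x_i, y_j)` with `1 ≤ i ≤ X`, `1 ≤ j ≤ Y` whose
indices lie in the same residue class modulo `gcd(X,Y)`. -/
theorem stmt1 {γ : Type*} (x y : ℕ → γ) (X Y : ℕ) (hX : 0 < X) (hY : 0 < Y)
    (hx : ∀ k, x (k + X) = x k) (hy : ∀ k, y (k + Y) = y k) :
    (Finset.Icc 1 (X * Y / Nat.gcd X Y)).val.map (fun k => (x k, y k)) =
      (((Finset.Icc 1 X) ×ˢ (Finset.Icc 1 Y)).filter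
        (fun p => p.1 % Nat.gcd X Y = p.2 % Nat.gcd X Y)).val.map
        (fun p => (x p.1, y p.2)) := by
  have hxy : ∀ k ∈ (Icc 1 (Nat.lcm X Y)).val,
      (x k, y k) = ((fun p : ℕ × ℕ => (x p.1, y p.2)) ∘ residuePair X Y) k := by
    intro k hk
    have hk₁ : 1 ≤ k := (mem_Icc.mp hk).1
    simp only [comp_apply, residuePair, Periodic.map_pred_mod_add_one hx hk₁,
      Periodic.map_pred_mod_add_one hy hk₁]
  change (Icc 1 (Nat.lcm X Y)).val.map _ = _
  rw [Multiset.map_congr rfl hxy, ← Multiset.map_map, ← image_val_of_injOn residuePair_injOn,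
    image_residuePair_Icc_lcm hX hY]
end

section
/- In the basic model, over a·B·N consecutive steps the Age-of-Information sequence generates the following distribution of values: the multiset { α_k : k = 1, …, aBN } equals the multiset union over i = 0, …, a−1 and j = 0, …, N−1 of the arithmetic progressions { c_{ij} + m·a·b : m = 0, 1, …, B−1 }. -/
/-!
Write `x = k·A'`, `u = x % N'` and `i = k % a`. Then `α_k` is the least integer `≥ u` that
is congruent to `x` modulo `B' = B·ab`, so it lies in `[u, u + B·ab)`. Since `a·n ∣ N'` and
`a·n, a·b ∣ a·A'`, we have `u = j·an + (i·A' % an)` with `0 ≤ j < N`, and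
`x ≡ i·A' (mod ab)`. The number `c_{ij}` is the least integer `≥ u` congruent to `i·A'`
modulo `ab`, so `α_k = c_{ij} + m·ab` with `0 ≤ m < B`. The map `k ↦ (i, j, m)` is injective
on `1, …, aBN`: equal indices force `x` to agree modulo `N'` and `B'`, and the gcd hypotheses
turn this into `k₁ ≡ k₂` modulo `Na` and `Ba`, hence modulo `lcm = aBN` since `B` and `N` are
coprime. Both sides have `aBN` elements, so it is a bijection onto `[0, a) × [0, N) × [0, B)`.
-/

/-- The Age-of-Information sequence of the basic model:
`α_k = (k·A' % N') + ((k·A' % B' − k·A' % N') % B')`. -/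
def aoiBasic (A' B' N' : ℤ) (k : ℕ) : ℤ :=
  ((k : ℤ) * A') % N' + (((k : ℤ) * A') % B' - ((k : ℤ) * A') % N') % B'

/-- The starting points `c_{ij}` of Theorem 1. -/
def cBasic (A' a b n : ℕ) (i j : ℕ) : ℤ :=
  ((i : ℤ) * A') % ((a : ℤ) * b) +
    ((a : ℤ) * b) *
      ⌈((((i : ℤ) * A') % ((a : ℤ) * n) - ((i : ℤ) * A') % ((a : ℤ) * b)
          + (j : ℤ) * a * n : ℤ) : ℚ) / ((a : ℚ) * b)⌉

open Finset

theorem Int.le_mul_ceil_div {D e : ℤ} (he : 0 < e) : D ≤ e * ⌈(D : ℚ) / e⌉ := by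
  have he' : (0 : ℚ) < e := by exact_mod_cast he
  have h : (D : ℚ) ≤ e * ⌈(D : ℚ) / e⌉ := (div_le_iff₀' he').mp (Int.le_ceil _)
  exact_mod_cast h

theorem Int.mul_ceil_div_lt {D e : ℤ} (he : 0 < e) : e * ⌈(D : ℚ) / e⌉ < D + e := by
  have he' : (0 : ℚ) < e := by exact_mod_cast he
  have h : (e : ℚ) * ⌈(D : ℚ) / e⌉ < D + e :=
    calc (e : ℚ) * ⌈(D : ℚ) / e⌉ < e * ((D : ℚ) / e + 1) :=
          mul_lt_mul_of_pos_left (Int.ceil_lt_add_one _) he'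
      _ = D + e := by field_simp
  exact_mod_cast h

theorem Nat.ModEq.eq_of_mem_Icc {M k₁ k₂ : ℕ} (h : k₁ ≡ k₂ [MOD M])
    (h₁ : k₁ ∈ Icc 1 M) (h₂ : k₂ ∈ Icc 1 M) : k₁ = k₂ := by
  rw [mem_Icc] at h₁ h₂
  exact h.eq_of_abs_lt (abs_sub_lt_iff.mpr ⟨by omega, by omega⟩)

theorem Finset.val_map_eq_bind_of_injOn {ι κ μ β : Type*} [DecidableEq κ] [DecidableEq μ]
    {s : Finset ι} {t : Finset κ} {u : Finset μ} (φ : ι → κ × μ) (g : κ → μ → β) {f : ι → β}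
    (hmaps : ∀ k ∈ s, φ k ∈ t ×ˢ u) (hinj : Set.InjOn φ s) (hcard : #t * #u ≤ #s)
    (hf : ∀ k ∈ s, f k = g (φ k).1 (φ k).2) :
    s.val.map f = t.val.bind fun p => u.val.map (g p) := by
  have himage : s.image φ = t ×ˢ u :=
    eq_of_subset_of_card_le (image_subset_iff.mpr hmaps)
      (by rwa [card_product, card_image_of_injOn hinj])
  calc s.val.map f = (s.val.map φ).map (fun q => g q.1 q.2) := by
        rw [Multiset.map_map]; exact Multiset.map_congr rfl hf
    _ = (t ×ˢ u).val.map (fun q => g q.1 q.2) := by rw [← himage, image_val_of_injOn hinj]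
    _ = t.val.bind fun p => u.val.map (g p) := by
        rw [product_val]
        simp only [SProd.sprod, Multiset.product, Multiset.map_bind, Multiset.map_map,
          Function.comp_def]

theorem aoiBasic_modEq (A' B' N' : ℤ) (k : ℕ) : aoiBasic A' B' N' k ≡ k * A' [ZMOD B'] := by
  unfold aoiBasic
  calc _ ≡ (k * A') % N' + ((k * A') % B' - (k * A') % N') [ZMOD B'] :=
        (Int.mod_modEq _ _).add_left _
    _ = (k * A') % B' := by ring
    _ ≡ k * A' [ZMOD B'] := Int.mod_modEq _ _

theorem le_aoiBasic (A' N' : ℤ) {B' : ℤ} (hB' : 0 < B') (k : ℕ) :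
    (k * A') % N' ≤ aoiBasic A' B' N' k :=
  le_add_of_nonneg_right (Int.emod_nonneg _ hB'.ne')

theorem aoiBasic_lt (A' N' : ℤ) {B' : ℤ} (hB' : 0 < B') (k : ℕ) :
    aoiBasic A' B' N' k < (k * A') % N' + B' :=
  add_lt_add_right (Int.emod_lt_of_pos _ hB') _

theorem cBasic_modEq (A' a b n i j : ℕ) : cBasic A' a b n i j ≡ i * A' [ZMOD a * b] := by
  unfold cBasic
  calc _ ≡ (i * A' : ℤ) % (a * b) [ZMOD a * b] := by
        simp only [Int.ModEq, Int.add_mul_emod_self_left]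
    _ ≡ i * A' [ZMOD a * b] := Int.mod_modEq _ _

theorem cBasic_bounds (A' : ℕ) {a b : ℕ} (ha : 0 < a) (hb : 0 < b) (n i j : ℕ) :
    (i * A' : ℤ) % (a * n) + j * (a * n) ≤ cBasic A' a b n i j ∧
      cBasic A' a b n i j < (i * A' : ℤ) % (a * n) + j * (a * n) + a * b := by
  have hab : (0 : ℤ) < a * b := by positivity
  have hcast : (a : ℚ) * b = ((a * b : ℤ) : ℚ) := by push_cast; ring
  unfold cBasic
  rw [hcast]
  constructor
  · linarith [Int.le_mul_ceil_div (D := (i * A' : ℤ) % (a * n) - (i * A' : ℤ) % (a * b)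
      + j * a * n) hab]
  · linarith [Int.mul_ceil_div_lt (D := (i * A' : ℤ) % (a * n) - (i * A' : ℤ) % (a * b)
      + j * a * n) hab]

theorem exists_eq_add_mul_of_modEq {y c u e : ℤ} {B : ℕ} (he : 0 < e) (hmod : y ≡ c [ZMOD e])
    (hy : u ≤ y) (hy' : y < u + B * e) (hc : u ≤ c) (hc' : c < u + e) :
    ∃ m < B, y = c + m * e := by
  obtain ⟨q, hq⟩ := (Int.modEq_iff_dvd.mp hmod.symm)
  have hq0 : 0 ≤ q := by nlinarith
  have hqB : q < B := by nlinarith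
  lift q to ℕ using hq0
  exact ⟨q, by exact_mod_cast hqB, by linarith⟩

theorem exists_aoiBasic_eq_cBasic_add {A B N a b n : ℕ} (hB : 0 < B) (hN : 0 < N)
    (ha : 0 < a) (hb : 0 < b) (hn : 0 < n) (k : ℕ) :
    ∃ j < N, ∃ m < B,
      (k * (A * b * n : ℤ)) % (N * a * n) =
          j * (a * n) + ((k % a : ℕ) * (A * b * n : ℤ)) % (a * n) ∧
        aoiBasic (A * b * n) (B * a * b) (N * a * n) k =
          cBasic (A * b * n) a b n (k % a) j + m * (a * b) := by
  set x : ℤ := k * (A * b * n)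
  set u : ℤ := x % (N * a * n)
  have hcast : ((A * b * n : ℕ) : ℤ) = A * b * n := by push_cast; ring
  have hk_mod : (k : ℤ) ≡ (k % a : ℕ) [ZMOD a] := by
    rw [Int.natCast_mod]; exact (Int.mod_modEq _ _).symm
  have hx : x ≡ (k % a : ℕ) * (A * b * n : ℤ) [ZMOD a * (A * b * n)] := hk_mod.mul_right'
  have hu : u % (a * n) = ((k % a : ℕ) * (A * b * n : ℤ)) % (a * n) := by
    rw [Int.emod_emod_of_dvd _ ⟨N, by ring⟩]
    exact hx.of_dvd ⟨A * b, by ring⟩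
  have hN' : (0 : ℤ) < N * a * n := by positivity
  have hj0 : 0 ≤ u / (a * n) := Int.ediv_nonneg (Int.emod_nonneg _ hN'.ne') (by positivity)
  have hjN : u / (a * n) < N :=
    Int.ediv_lt_of_lt_mul (by positivity) (by rw [← mul_assoc]; exact Int.emod_lt_of_pos _ hN')
  obtain ⟨j, hj⟩ := Int.eq_ofNat_of_zero_le hj0
  have hu_eq : u = j * (a * n) + ((k % a : ℕ) * (A * b * n : ℤ)) % (a * n) := by
    rw [← hj, ← hu, mul_comm]; exact (Int.mul_ediv_add_emod u (a * n)).symm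
  obtain ⟨hc, hc'⟩ := cBasic_bounds (A * b * n) ha hb n (k % a) j
  have hc_mod := cBasic_modEq (A * b * n) a b n (k % a) j
  rw [hcast] at hc hc' hc_mod
  have hαc : aoiBasic (A * b * n) (B * a * b) (N * a * n) k ≡ cBasic (A * b * n) a b n (k % a) j
      [ZMOD a * b] :=
    ((aoiBasic_modEq _ _ _ k).of_dvd ⟨B, by ring⟩).trans
      ((hx.of_dvd ⟨A * n, by ring⟩).trans hc_mod.symm)
  have hB' : (0 : ℤ) < B * a * b := by positivity
  have hα : u ≤ aoiBasic (A * b * n) (B * a * b) (N * a * n) k := le_aoiBasic _ _ hB' k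
  have hα' : aoiBasic (A * b * n) (B * a * b) (N * a * n) k < u + B * (a * b) := by
    rw [← mul_assoc]; exact aoiBasic_lt _ _ hB' k
  obtain ⟨m, hmB, hm⟩ := exists_eq_add_mul_of_modEq (by positivity) hαc hα hα'
    (by linarith) (by linarith)
  exact ⟨j, by exact_mod_cast hj ▸ hjN, m, hmB, hu_eq, hm⟩

theorem Nat.coprime_of_eq_gcd_mul_mul {B N a b n : ℕ} (ha : 0 < a)
    (hgcd : a = Nat.gcd (B * a * b) (N * a * n)) : Nat.Coprime B N := by
  have h : Nat.gcd (B * b) (N * n) * a = 1 * a :=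
    calc Nat.gcd (B * b) (N * n) * a = Nat.gcd (B * a * b) (N * a * n) := by
          rw [← Nat.gcd_mul_right]; congr 1 <;> ring
      _ = 1 * a := by rw [← hgcd, one_mul]
  have hcop : Nat.Coprime (B * b) (N * n) := Nat.eq_of_mul_eq_mul_right ha h
  exact hcop.coprime_mul_right.coprime_mul_right_right

theorem Nat.ModEq.cancel_of_gcd_eq {k₁ k₂ c M d : ℕ} (hd : 0 < d) (hM : 0 < M * d)
    (hgcd : d = Nat.gcd c (M * d)) (h : k₁ * c ≡ k₂ * c [MOD M * d]) : k₁ ≡ k₂ [MOD M] := by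
  have := h.cancel_right_div_gcd hM
  rwa [Nat.gcd_comm, ← hgcd, Nat.mul_div_cancel _ hd] at this

theorem eq_of_mul_modEq_of_mem_Icc {A B N a b n : ℕ} (hB : 0 < B) (hN : 0 < N)
    (ha : 0 < a) (hb : 0 < b) (hn : 0 < n)
    (hgcd_a : a = Nat.gcd (B * a * b) (N * a * n)) (hgcd_b : b = Nat.gcd (A * b * n) (B * a * b))
    (hgcd_n : n = Nat.gcd (A * b * n) (N * a * n)) {k₁ k₂ : ℕ}
    (h₁ : k₁ ∈ Icc 1 (a * B * N)) (h₂ : k₂ ∈ Icc 1 (a * B * N))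
    (hmodN : k₁ * (A * b * n : ℤ) ≡ k₂ * (A * b * n) [ZMOD N * a * n])
    (hmodB : k₁ * (A * b * n : ℤ) ≡ k₂ * (A * b * n) [ZMOD B * a * b]) : k₁ = k₂ := by
  have hNa : k₁ ≡ k₂ [MOD N * a] :=
    Nat.ModEq.cancel_of_gcd_eq hn (by positivity) hgcd_n
      (Int.natCast_modEq_iff.mp (by exact_mod_cast hmodN))
  have hBa : k₁ ≡ k₂ [MOD B * a] :=
    Nat.ModEq.cancel_of_gcd_eq hb (by positivity) hgcd_b
      (Int.natCast_modEq_iff.mp (by exact_mod_cast hmodB))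
  have hlcm : Nat.lcm (N * a) (B * a) = a * B * N := by
    rw [Nat.lcm_mul_right, (Nat.coprime_of_eq_gcd_mul_mul ha hgcd_a).symm.lcm_eq_mul]; ring
  have h := Int.modEq_and_modEq_iff_modEq_lcm.mp
    ⟨Int.natCast_modEq_iff.mpr hNa, Int.natCast_modEq_iff.mpr hBa⟩
  rw [Int.lcm_natCast_natCast, hlcm, Int.natCast_modEq_iff] at h
  exact h.eq_of_mem_Icc h₁ h₂

theorem stmt5_general (A B N a b n : ℕ) (hB : 0 < B) (hN : 0 < N)
    (hapos : 0 < a) (hbpos : 0 < b) (hnpos : 0 < n)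
    (ha : a = Nat.gcd (B * a * b) (N * a * n))
    (hb : b = Nat.gcd (A * b * n) (B * a * b))
    (hn : n = Nat.gcd (A * b * n) (N * a * n)) :
    (Finset.Icc 1 (a * B * N)).val.map
        (fun k => aoiBasic (A * b * n : ℤ) (B * a * b : ℤ) (N * a * n : ℤ) k) =
      ((Finset.range a ×ˢ Finset.range N).val.bind
        (fun p => (Multiset.range B).map
          (fun m => cBasic (A * b * n) a b n p.1 p.2 + (m : ℤ) * ((a : ℤ) * b)))) := by
  choose j hjN m hmB hu hα using
    exists_aoiBasic_eq_cBasic_add (A := A) hB hN hapos hbpos hnpos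
  -- `(Multiset.range B).map` over `m : ℤ` elaborated as a map over the monadic lift of
  -- `Multiset.range B` to `Multiset ℤ`; turn it back into a map over `Multiset.range B`.
  simp only [bind_pure_comp, Multiset.fmap_def, Multiset.map_map, Function.comp_def]
  refine Finset.val_map_eq_bind_of_injOn (u := range B) (fun k => ((k % a, j k), m k))
    (fun p m => cBasic (A * b * n) a b n p.1 p.2 + (m : ℤ) * ((a : ℤ) * b))
    (fun k _ => ?_) (fun k₁ h₁ k₂ h₂ h => ?_) ?_ (fun k _ => hα k)
  · simp only [mem_product, mem_range]
    exact ⟨⟨Nat.mod_lt k hapos, hjN k⟩, hmB k⟩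
  · simp only [Prod.mk.injEq] at h
    obtain ⟨⟨hi, hj⟩, hm⟩ := h
    refine eq_of_mul_modEq_of_mem_Icc hB hN hapos hbpos hnpos ha hb hn h₁ h₂ ?_ ?_
    · change _ % _ = _ % _
      rw [hu, hu, hi, hj]
    · have hα_modEq := aoiBasic_modEq (A * b * n : ℤ) (B * a * b) (N * a * n)
      refine (hα_modEq k₁).symm.trans (.trans ?_ (hα_modEq k₂))
      rw [hα, hα, hi, hj, hm]
  · rw [card_product, card_range, card_range, card_range, Nat.card_Icc, Nat.add_sub_cancel,
      mul_right_comm]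

/-- Theorem 1 (distribution part): in the basic model, over `a·B·N` consecutive
steps the AoI sequence generates the multiset union over `i = 0,…,a−1` and
`j = 0,…,N−1` of the arithmetic progressions `{c_{ij} + m·a·b : m = 0,…,B−1}`. -/
theorem stmt5 (A B N a b n : ℕ) (hA : 0 < A) (hB : 0 < B) (hN : 0 < N)
    (hapos : 0 < a) (hbpos : 0 < b) (hnpos : 0 < n)
    (ha : a = Nat.gcd (B * a * b) (N * a * n))
    (hb : b = Nat.gcd (A * b * n) (B * a * b))
    (hn : n = Nat.gcd (A * b * n) (N * a * n)) :
    (Finset.Icc 1 (a * B * N)).val.map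
        (fun k => aoiBasic (A * b * n : ℤ) (B * a * b : ℤ) (N * a * n : ℤ) k) =
      ((Finset.range a ×ˢ Finset.range N).val.bind
        (fun p => (Multiset.range B).map
          (fun m => cBasic (A * b * n) a b n p.1 p.2 + (m : ℤ) * ((a : ℤ) * b)))) :=
  stmt5_general A B N a b n hB hN hapos hbpos hnpos ha hb hn
end

section
/- In the basic model, the exact mean Age-of-Information over one period satisfies (1/(aBN))·Σ_{k=1}^{aBN} α_k = (B' + N' − n + a·b)/2 − (b/N)·( (a·(b+1)/2)·⌊N/b⌋ + ⌈(N % b)·a/b⌉ + Σ_{i=0}^{a−1} Σ_{j=0}^{(N % b)−1} ( ((j − ⌊i·b/a⌋)·n) % b )/b ), as an equality of rational numbers. -/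
open Finset

namespace Finset

variable {M : Type*} [AddCommMonoid M]

theorem sum_Icc_one_eq_sum_range {f : ℕ → M} {P : ℕ} (hf : f P = f 0) :
    ∑ k ∈ Icc 1 P, f k = ∑ k ∈ range P, f k := by
  rw [← Ico_add_one_right_eq_Icc, sum_Ico_eq_sum_range, Nat.add_sub_cancel]
  simp_rw [add_comm 1]
  cases P with
  | zero => rfl
  | succ p => rw [sum_range_succ, sum_range_succ' f, hf]

theorem sum_range_mul_eq_sum_sum (m n : ℕ) (f : ℕ → M) :
    ∑ k ∈ range (m * n), f k = ∑ i ∈ range m, ∑ j ∈ range n, f (i + m * j) := by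
  induction n with
  | zero => simp
  | succ n ih =>
    rw [Nat.mul_succ, sum_range_add, ih]
    simp only [sum_range_succ, sum_add_distrib, add_comm (m * n)]

theorem sum_range_mul_add_of_periodic {f : ℕ → M} {m : ℕ} (hf : Function.Periodic f m)
    (q r : ℕ) :
    ∑ k ∈ range (m * q + r), f k = q • ∑ k ∈ range m, f k + ∑ k ∈ range r, f k := by
  have hper (i j : ℕ) : f (i + m * j) = f i := by simpa [mul_comm] using hf.nat_mul j i
  rw [sum_range_add, sum_range_mul_eq_sum_sum]
  simp only [hper, add_comm (m * q), sum_const, card_range, sum_nsmul]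

theorem sum_range_emod_add_mul {m : ℕ} {d : ℤ} (hd : IsCoprime d m) (c : ℤ) (f : ℤ → M) :
    ∑ t ∈ range m, f ((c + t * d) % m) = ∑ t ∈ range m, f t := by
  obtain rfl | hm := Nat.eq_zero_or_pos m
  · simp
  have hm' : (0 : ℤ) < m := by exact_mod_cast hm
  set g : ℕ → ℕ := fun t ↦ ((c + t * d) % m).toNat
  have hg (t : ℕ) : (g t : ℤ) = (c + t * d) % m :=
    Int.toNat_of_nonneg (Int.emod_nonneg _ hm'.ne')
  have hmaps : Set.MapsTo g (range m) (range m) := fun t _ ↦ by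
    have := Int.emod_lt_of_pos (c + t * d) hm'
    have := hg t
    simp only [coe_range, Set.mem_Iio]
    omega
  have hinj : Set.InjOn g (range m) := fun x hx y hy hxy ↦ by
    simp only [coe_range, Set.mem_Iio] at hx hy
    have hmod : c + x * d ≡ c + y * d [ZMOD m] := by
      rw [Int.ModEq, ← hg, ← hg, hxy]
    have hdvd : (m : ℤ) ∣ y - x :=
      hd.symm.dvd_of_dvd_mul_right (by simpa [sub_mul] using hmod.dvd)
    have := Int.eq_zero_of_abs_lt_dvd hdvd (by rw [abs_lt]; omega)
    omega
  exact sum_nbij g hmaps hinj (surjOn_of_injOn_of_card_le g hmaps hinj le_rfl)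
    fun t _ ↦ by rw [hg]

end Finset

theorem Nat.coprime_of_eq_gcd_mul_left {c x y : ℕ} (hc : 0 < c)
    (h : c = Nat.gcd (c * x) (c * y)) : Nat.Coprime x y := by
  rwa [Nat.gcd_mul_left, eq_comm, Nat.mul_eq_left hc.ne'] at h

theorem sum_range_intCast_mul_two (m : ℕ) : (∑ i ∈ range m, (i : ℤ)) * 2 = m * (m - 1) := by
  induction m with
  | zero => simp
  | succ m ih => rw [sum_range_succ, add_mul, ih]; push_cast; ring

theorem sum_range_add_ediv {m : ℕ} (hm : 0 < m) (w : ℤ) :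
    ∑ t ∈ range m, (w + t) / m = w := by
  have hstep (w : ℤ) :
      ∑ t ∈ range m, (w + 1 + t) / m = ∑ t ∈ range m, (w + t) / m + 1 := by
    have h := (sum_range_succ' (fun t : ℕ ↦ (w + t) / (m : ℤ)) m).symm.trans
      (sum_range_succ _ m)
    have hwm : (w + m) / m = w / m + 1 := by
      simpa using Int.add_mul_ediv_right w 1 (by exact_mod_cast hm.ne' : (m : ℤ) ≠ 0)
    simp only [Nat.cast_add, Nat.cast_one, Nat.cast_zero, add_zero, hwm] at h
    simp only [add_right_comm w 1, add_assoc w]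
    linear_combination h
  induction w using Int.induction_on with
  | zero =>
    refine sum_eq_zero fun t ht ↦ Int.ediv_eq_zero_of_lt (by positivity) ?_
    simpa using mem_range.mp ht
  | succ k ih => rw [hstep, ih]
  | pred k ih =>
    have h := hstep (-k - 1)
    simp only [sub_add_cancel, ih] at h
    linarith

theorem sum_range_add_mul_ediv {β : ℤ} (hβ : 0 < β) {m : ℕ} (hm : 0 < m) (z : ℤ) :
    ∑ t ∈ range m, (z + β * t) / (β * m) = z / β := by
  rw [← sum_range_add_ediv hm (z / β)]
  refine sum_congr rfl fun t _ ↦ ?_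
  rw [← Int.ediv_ediv_of_nonneg hβ.le, Int.add_mul_ediv_left _ _ hβ.ne']

theorem sum_range_emod_sub_ediv {β : ℤ} (hβ : 0 < β) {m : ℕ} (hm : 0 < m) {d : ℤ}
    (hd : IsCoprime d m) (X R : ℤ) :
    ∑ j ∈ range m, ((X + β * (j * d)) % (β * m) - R) / (β * m) = (X % β - R) / β := by
  have hβm : β * m ≠ 0 := by positivity
  have hred (y : ℤ) : (X + β * y) % (β * m) = (X + β * (y % m)) % (β * m) := by
    rw [show X + β * y = X + β * (y % m) + y / m * (β * m) by
      linear_combination β * (Int.mul_ediv_add_emod y m).symm, Int.add_mul_emod_self_right]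
  have hsplit (t : ℤ) : ((X + β * t) % (β * m) - R) / (β * m)
      = (X - R + β * t) / (β * m) - (X + β * t) / (β * m) := by
    rw [Int.emod_def, show X + β * t - β * m * ((X + β * t) / (β * m)) - R
      = X - R + β * t + -((X + β * t) / (β * m)) * (β * m) by ring,
      Int.add_mul_ediv_right _ _ hβm, ← sub_eq_add_neg]
  rw [sum_congr rfl fun j _ ↦ by rw [hred, ← zero_add (j * d)],
    sum_range_emod_add_mul hd 0 fun y ↦ ((X + β * y) % (β * m) - R) / (β * m)]
  simp only [hsplit, sum_sub_distrib, sum_range_add_mul_ediv hβ hm]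
  rw [show X - R = X % β - R + X / β * β by
      linear_combination (Int.mul_ediv_add_emod X β).symm,
    Int.add_mul_ediv_right _ _ hβ.ne', add_sub_cancel_right]

theorem two_mul_sum_range_mul_ediv {a : ℕ} (ha : 0 < a) {n : ℤ} (hn : IsCoprime n a) :
    2 * ∑ i ∈ range a, i * n / a = (n - 1) * (a - 1) := by
  have hmod : ∑ i ∈ range a, i * n % a = ∑ i ∈ range a, (i : ℤ) := by
    simpa using sum_range_emod_add_mul hn 0 id
  have hdiv : (a : ℤ) * ∑ i ∈ range a, i * n / a
      = (∑ i ∈ range a, (i : ℤ)) * n - ∑ i ∈ range a, i * n % a := by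
    rw [mul_sum, sum_mul, ← sum_sub_distrib]
    exact sum_congr rfl fun i _ ↦ by linear_combination Int.mul_ediv_add_emod (i * n) a
  rw [hmod] at hdiv
  refine mul_left_cancel₀ (by exact_mod_cast ha.ne' : (a : ℤ) ≠ 0) ?_
  linear_combination 2 * hdiv + (n - 1) * sum_range_intCast_mul_two a

theorem mul_sub_emod_eq_ite_sub_emod {b : ℕ} {n : ℤ} (hn : IsCoprime n b) {c j : ℕ}
    (hc : c < b) (hj : j < b) :
    n * (c - j) % b = (if j = c then 0 else (b : ℤ)) - (j - c) * n % b := by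
  have hdvd : (b : ℤ) ∣ (j - c) * n ↔ j = c := by
    refine ⟨fun h ↦ ?_, fun h ↦ by simp [h]⟩
    have := Int.eq_zero_of_abs_lt_dvd (hn.symm.dvd_of_dvd_mul_right h) (by rw [abs_lt]; omega)
    omega
  rw [show n * (c - j) = -((j - c) * n) by ring, Int.neg_emod]
  split_ifs with h1 h2 h2
  · simp [h2]
  · exact absurd (hdvd.mp h1) h2
  · exact absurd (hdvd.mpr h2) h1
  · simp

theorem two_mul_sum_range_mul_sub_ediv {b : ℕ} {n : ℤ} (hn : IsCoprime n b)
    {c : ℕ} (hc : c < b) {N q r : ℕ} (hN : N = b * q + r) (hr : r < b) :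
    2 * b * ∑ m ∈ range N, n * (c - m) / b
      = 2 * n * N * c - n * N * (N - 1) - q * b * (b - 1) - 2 * r * b
        + 2 * b * (if c < r then 1 else 0) + 2 * ∑ j ∈ range r, (j - c) * n % b := by
  have hlin : ∑ m ∈ range N, n * (c - m) = N * n * c - n * ∑ m ∈ range N, (m : ℤ) := by
    simp only [mul_sub, sum_sub_distrib, sum_const, card_range, nsmul_eq_mul, mul_sum]
    ring
  have hblock : ∑ t ∈ range b, n * (c - t) % b = ∑ t ∈ range b, (t : ℤ) := by
    refine (sum_congr rfl fun t _ ↦ ?_).trans (sum_range_emod_add_mul hn.neg_left (n * c) id)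
    rw [show n * (c - t) = n * c + t * -n by ring, id]
  have hperiodic : Function.Periodic (fun m : ℕ ↦ n * (c - m) % b) b := fun m ↦ by
    simp only [Nat.cast_add]
    rw [show n * (c - (m + b)) = n * (c - m) + -n * b by ring, Int.add_mul_emod_self_right]
  have htail : ∑ j ∈ range r, n * (c - j) % b
      = r * b - (if c < r then (b : ℤ) else 0) - ∑ j ∈ range r, (j - c) * n % b := by
    rw [sum_congr rfl fun j hj ↦ mul_sub_emod_eq_ite_sub_emod hn hc ((mem_range.mp hj).trans hr),
      sum_sub_distrib, sub_left_inj]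
    have hflip (j : ℕ) :
        (if j = c then 0 else (b : ℤ)) = b - if j = c then (b : ℤ) else 0 := by
      split_ifs <;> simp
    simp only [hflip, sum_sub_distrib, sum_const, card_range, nsmul_eq_mul, sum_ite_eq', mem_range]
  have hmod : ∑ m ∈ range N, n * (c - m) % b
      = q * ∑ t ∈ range b, (t : ℤ) + ∑ j ∈ range r, n * (c - j) % b := by
    rw [hN, sum_range_mul_add_of_periodic hperiodic, hblock, nsmul_eq_mul]
  have hdiv : b * ∑ m ∈ range N, n * (c - m) / b
      = ∑ m ∈ range N, n * (c - m) - ∑ m ∈ range N, n * (c - m) % b := by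
    rw [mul_sum, ← sum_sub_distrib]
    exact sum_congr rfl fun m _ ↦ by linear_combination Int.mul_ediv_add_emod (n * (c - m)) b
  rw [mul_assoc, hdiv, hlin, hmod, htail]
  split_ifs <;>
    linear_combination (-n) * sum_range_intCast_mul_two N - q * sum_range_intCast_mul_two b

theorem card_filter_mul_div_lt {a b r : ℕ} (ha : 0 < a) (hb : 0 < b) (hr : r ≤ b) :
    (#{i ∈ range a | i * b / a < r} : ℤ) = ⌈(r : ℚ) * a / b⌉ := by
  have hb' : (0 : ℚ) < b := by exact_mod_cast hb
  have hle : (r : ℚ) * a / b ≤ a := by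
    rw [div_le_iff₀ hb', mul_comm]
    exact mul_le_mul_of_nonneg_left (by exact_mod_cast hr) (by positivity)
  have hfilter : {i ∈ range a | i * b / a < r} = range ⌈(r : ℚ) * a / b⌉₊ := by
    ext i
    have hlt : i * b / a < r ↔ (i : ℚ) < r * a / b := by
      rw [Nat.div_lt_iff_lt_mul ha, lt_div_iff₀ hb']
      exact_mod_cast Iff.rfl
    simp only [mem_filter, mem_range, Nat.lt_ceil, hlt]
    exact ⟨And.right, fun h ↦ ⟨by exact_mod_cast h.trans_le hle, h⟩⟩
  rw [hfilter, card_range, Int.natCast_ceil_eq_ceil (by positivity)]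

theorem aoiBasic_eq (A' B' N' : ℤ) (k : ℕ) :
    aoiBasic A' B' N' k = k * A' % B' - B' * ((k * A' % B' - k * A' % N') / B') := by
  rw [aoiBasic, Int.emod_def (_ - _)]
  ring

theorem aoiBasic_eq_zero {A' B' N' : ℤ} {k : ℕ} (hB : B' ∣ k * A') (hN : N' ∣ k * A') :
    aoiBasic A' B' N' k = 0 := by
  simp [aoiBasic, Int.emod_eq_zero_of_dvd hB, Int.emod_eq_zero_of_dvd hN]

/-- `wrapTerm a b n N (x * A)` is the sum of the carries `⌊(x_k - y_k) / B'⌋` over the `B`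
indices `k < a B N` with `k ≡ x [MOD N a]`. -/
def wrapTerm (a b n N : ℕ) (w : ℤ) : ℤ :=
  (w * (b * n) % (a * b) - w * (b * n) % (N * a * n)) / (a * b)

section

variable {a b n N : ℕ}

theorem wrapTerm_emod (hb : 0 < b) (hn : 0 < n) (w : ℤ) :
    wrapTerm a b n N (w % (N * a)) = wrapTerm a b n N w := by
  have hbn : (0 : ℤ) < b * n := by positivity
  have hmul : w % (N * a) * (b * n) = w * (b * n) % (N * a * (b * n)) := by
    rw [mul_comm _ (b * n : ℤ), mul_comm (N * a : ℤ), mul_comm w,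
      Int.mul_emod_mul_of_pos _ _ hbn]
  rw [wrapTerm, wrapTerm, hmul, Int.emod_emod_of_dvd _ ⟨N * n, by ring⟩,
    Int.emod_emod_of_dvd _ ⟨b, by ring⟩]

theorem wrapTerm_add_mul (ha : 0 < a) (hb : 0 < b) (hn : 0 < n) (i m : ℤ) :
    wrapTerm a b n N (i + a * m)
      = n * (i * b / a - (i * b / a + m * b) % N) / b - i * n / a := by
  have ha' : (0 : ℤ) < a := by exact_mod_cast ha
  have hb' : (0 : ℤ) < b := by exact_mod_cast hb
  have hn' : (0 : ℤ) < n := by exact_mod_cast hn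
  set w := i + a * m
  have hmod_ab : w * (b * n) % (a * b) = b * (w * n % a) := by
    rw [show w * (b * n) = b * (w * n) by ring, mul_comm (a : ℤ),
      Int.mul_emod_mul_of_pos _ _ hb']
  have hmod_Nan : w * (b * n) % (N * a * n) = n * (w * b % (N * a)) := by
    rw [show w * (b * n) = n * (w * b) by ring, show (N * a * n : ℤ) = n * (N * a) by ring,
      Int.mul_emod_mul_of_pos _ _ hn']
  have hdiv_Na : w * b / (N * a) = (i * b / a + m * b) / N := by
    rw [mul_comm (N : ℤ), ← Int.ediv_ediv_of_nonneg ha'.le,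
      show w * b = i * b + a * (m * b) by ring, Int.add_mul_ediv_left _ _ ha'.ne']
  have hdiv_a : w * n / a = i * n / a + m * n := by
    rw [show w * n = i * n + a * (m * n) by ring, Int.add_mul_ediv_left _ _ ha'.ne']
  rw [wrapTerm, hmod_ab, hmod_Nan, Int.emod_def (w * n), Int.emod_def (w * b),
    show b * (w * n - a * (w * n / a)) - n * (w * b - N * a * (w * b / (N * a)))
      = a * (n * N * (w * b / (N * a)) - b * (w * n / a)) by ring,
    Int.mul_ediv_mul_of_pos _ _ ha', hdiv_Na, hdiv_a]
  set M := i * b / a + m * b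
  rw [show n * N * (M / N) - b * (i * n / a + m * n)
      = n * (i * b / a - M % N) + -(i * n / a) * b by
      linear_combination n * (Int.mul_ediv_add_emod M N),
    Int.add_mul_ediv_right _ _ hb'.ne', ← sub_eq_add_neg]

variable {A B : ℕ}

theorem sum_range_wrap_eq_sum_wrapTerm (hB : 0 < B) (ha : 0 < a) (hb : 0 < b)
    (hcop : IsCoprime ((N * A * n : ℕ) : ℤ) B) :
    ∑ k ∈ range (a * B * N),
        ((k : ℤ) * (A * b * n) % (B * a * b) - k * (A * b * n) % (N * a * n)) / (B * a * b)
      = ∑ x ∈ range (N * a), wrapTerm a b n N (x * A) := by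
  rw [show a * B * N = N * a * B by ring, sum_range_mul_eq_sum_sum]
  refine sum_congr rfl fun x _ ↦ ?_
  have hy (j : ℕ) : ((x + N * a * j : ℕ) : ℤ) * (A * b * n) % (N * a * n)
      = x * (A * b * n) % (N * a * n) := by
    rw [show ((x + N * a * j : ℕ) : ℤ) * (A * b * n)
        = x * (A * b * n) + j * A * b * (N * a * n) by push_cast; ring,
      Int.add_mul_emod_self_right]
  have hx (j : ℕ) : ((x + N * a * j : ℕ) : ℤ) * (A * b * n)
      = x * (A * b * n) + a * b * (j * (N * A * n : ℕ)) := by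
    push_cast; ring
  simp only [hy]
  simp only [hx, show (B * a * b : ℤ) = a * b * B by ring]
  rw [sum_range_emod_sub_ediv (by positivity) hB hcop, wrapTerm,
    show (x : ℤ) * (A * b * n) = x * A * (b * n) by ring]

theorem sum_range_wrapTerm_mul (hb : 0 < b) (hn : 0 < n)
    (hcop : IsCoprime (A : ℤ) ((N * a : ℕ) : ℤ)) :
    ∑ x ∈ range (N * a), wrapTerm a b n N (x * A)
      = ∑ w ∈ range (N * a), wrapTerm a b n N w := by
  have := sum_range_emod_add_mul hcop 0 (wrapTerm a b n N)
  simp only [zero_add, Nat.cast_mul, wrapTerm_emod hb hn] at this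
  exact this

theorem sum_range_wrapTerm (ha : 0 < a) (hb : 0 < b) (hn : 0 < n) (hcop : IsCoprime (b : ℤ) N) :
    ∑ w ∈ range (N * a), wrapTerm a b n N w
      = ∑ i ∈ range a, ∑ m ∈ range N, ((n : ℤ) * (i * b / a - m) / b - i * n / a) := by
  rw [mul_comm N a, sum_range_mul_eq_sum_sum]
  refine sum_congr rfl fun i _ ↦ ?_
  rw [← sum_range_emod_add_mul hcop (i * b / a)
    fun m : ℤ ↦ n * (i * b / a - m) / b - i * n / a]
  refine sum_congr rfl fun m _ ↦ ?_
  push_cast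
  exact wrapTerm_add_mul ha hb hn i m

theorem two_mul_sum_range_mul_emod (hb : 0 < b)
    (hcop : IsCoprime ((A * n : ℕ) : ℤ) ((B * a : ℕ) : ℤ)) :
    2 * ∑ k ∈ range (a * B * N), (k : ℤ) * (A * b * n) % (B * a * b)
      = N * b * (B * a) * (B * a - 1) := by
  have hb' : (0 : ℤ) < b := by exact_mod_cast hb
  have hterm (k : ℕ) :
      (k : ℤ) * (A * b * n) % (B * a * b) = b * ((0 + k * (A * n : ℕ)) % (B * a : ℕ)) := by
    push_cast
    rw [show (0 + k * (A * n) : ℤ) = k * (A * n) by ring, ← Int.mul_emod_mul_of_pos _ _ hb']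
    ring_nf
  have hper : Function.Periodic (fun k : ℕ ↦ (k : ℤ) * (A * b * n) % (B * a * b)) (B * a) := by
    intro k
    simp only
    rw [show ((k + B * a : ℕ) : ℤ) * (A * b * n) = k * (A * b * n) + A * n * (B * a * b) by
      push_cast; ring, Int.add_mul_emod_self_right]
  rw [show a * B * N = B * a * N + 0 by ring, sum_range_mul_add_of_periodic hper, sum_range_zero,
    add_zero, nsmul_eq_mul, sum_congr rfl fun k _ ↦ hterm k, ← mul_sum,
    sum_range_emod_add_mul hcop 0 fun t : ℤ ↦ t]
  have hgauss := sum_range_intCast_mul_two (B * a)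
  push_cast at hgauss
  linear_combination (N * b : ℤ) * hgauss

theorem two_mul_mul_sum_range_sum_range_ediv (ha : 0 < a) (hb : 0 < b)
    (hnb : Nat.Coprime n b) (hba : Nat.Coprime b a) (hna : Nat.Coprime n a) :
    2 * b * ∑ i ∈ range a, ∑ m ∈ range N, ((n : ℤ) * (i * b / a - m) / b - i * n / a)
      = n * N * (b - 1) * (a - 1) - b * N * (n - 1) * (a - 1)
        - a * (n * N * (N - 1) + (N : ℤ) / b * b * (b - 1) + 2 * ((N : ℤ) % b) * b)
        + 2 * b * #{i ∈ range a | i * b / a < N % b}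
        + 2 * ∑ i ∈ range a, ∑ j ∈ range (N % b), ((j : ℤ) - i * b / a) * n % b := by
  have hrow (i : ℕ) (hi : i ∈ range a) :
      2 * b * ∑ m ∈ range N, ((n : ℤ) * (i * b / a - m) / b - i * n / a)
        = 2 * n * N * (i * b / a) - n * N * (N - 1) - (N : ℤ) / b * b * (b - 1)
          - 2 * ((N : ℤ) % b) * b + 2 * b * (if i * b / a < N % b then 1 else 0)
          + 2 * ∑ j ∈ range (N % b), ((j : ℤ) - i * b / a) * n % b
          - 2 * b * N * (i * n / a) := by
    have hc : i * b / a < b :=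
      Nat.div_lt_of_lt_mul (Nat.mul_lt_mul_of_pos_right (mem_range.mp hi) hb)
    have := two_mul_sum_range_mul_sub_ediv hnb.isCoprime hc (Nat.div_add_mod N b).symm
      (Nat.mod_lt N hb)
    rw [sum_sub_distrib, sum_const, card_range, nsmul_eq_mul]
    push_cast at this
    linear_combination this
  rw [mul_sum, sum_congr rfl hrow]
  simp only [sum_add_distrib, sum_sub_distrib, sum_const, card_range, nsmul_eq_mul, ← mul_sum,
    sum_boole]
  linear_combination (n * N : ℤ) * two_mul_sum_range_mul_ediv ha hba.isCoprime
    - (b * N : ℤ) * two_mul_sum_range_mul_ediv ha hna.isCoprime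

theorem two_mul_sum_range_aoiBasic (hB : 0 < B) (ha : 0 < a) (hb : 0 < b) (hn : 0 < n)
    (hBN : Nat.Coprime (B * b) (N * n)) (hAB : Nat.Coprime (A * n) (B * a))
    (hAN : Nat.Coprime (A * b) (N * a)) :
    2 * ∑ k ∈ range (a * B * N), aoiBasic (A * b * n) (B * a * b) (N * a * n) k
      = a * B * (N * (B * a * b + N * a * n - n + a * b) - a * b * (b + 1) * ((N : ℤ) / b)
          - 2 * b * #{i ∈ range a | i * b / a < N % b}
          - 2 * ∑ i ∈ range a, ∑ j ∈ range (N % b), ((j : ℤ) - i * b / a) * n % b) := by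
  have hNB : Nat.Coprime (N * A * n) B :=
    ((hBN.symm.coprime_mul_right.coprime_mul_right_right).mul_left
      hAB.coprime_mul_right.coprime_mul_right_right).mul_left
      hBN.symm.coprime_mul_left.coprime_mul_right_right
  have hwrap := (sum_range_wrap_eq_sum_wrapTerm hB ha hb hNB.isCoprime).trans <|
    (sum_range_wrapTerm_mul hb hn hAN.coprime_mul_right.isCoprime).trans <|
    sum_range_wrapTerm ha hb hn hAN.coprime_mul_left.coprime_mul_right_right.isCoprime
  have hcarry := two_mul_mul_sum_range_sum_range_ediv (N := N) ha hb
    hBN.coprime_mul_left.coprime_mul_left_right.symm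
    hAN.coprime_mul_left.coprime_mul_left_right hAB.coprime_mul_left.coprime_mul_left_right
  rw [sum_congr rfl fun k _ ↦ aoiBasic_eq _ _ _ k, sum_sub_distrib, ← mul_sum, hwrap]
  linear_combination two_mul_sum_range_mul_emod (N := N) hb hAB.isCoprime
    - (B * a : ℤ) * hcarry + (2 * a ^ 2 * B * b : ℤ) * Int.mul_ediv_add_emod N b

end

theorem stmt6_general (A B N a b n : ℕ) (hB : 0 < B) (hN : 0 < N)
    (hapos : 0 < a) (hbpos : 0 < b) (hnpos : 0 < n)
    (ha : a = Nat.gcd (B * a * b) (N * a * n))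
    (hb : b = Nat.gcd (A * b * n) (B * a * b))
    (hn : n = Nat.gcd (A * b * n) (N * a * n)) :
    (1 / ((a : ℚ) * B * N)) *
        ∑ k ∈ Finset.Icc 1 (a * B * N),
          ((aoiBasic (A * b * n : ℤ) (B * a * b : ℤ) (N * a * n : ℤ) k : ℤ) : ℚ) =
      ((B : ℚ) * a * b + (N : ℚ) * a * n - n + (a : ℚ) * b) / 2 -
        ((b : ℚ) / N) *
          (((a : ℚ) * ((b : ℚ) + 1) / 2) * (⌊(N : ℚ) / (b : ℚ)⌋ : ℚ) +
            (⌈((N % b : ℕ) : ℚ) * (a : ℚ) / (b : ℚ)⌉ : ℚ) +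
            ∑ i ∈ Finset.range a, ∑ j ∈ Finset.range (N % b),
              (((((j : ℤ) - ⌊(i : ℚ) * (b : ℚ) / (a : ℚ)⌋) * (n : ℤ)) % (b : ℤ) : ℤ) : ℚ) /
                (b : ℚ)) := by
  have hBN : Nat.Coprime (B * b) (N * n) :=
    Nat.coprime_of_eq_gcd_mul_left hapos (by convert ha using 2 <;> ring)
  have hAB : Nat.Coprime (A * n) (B * a) :=
    Nat.coprime_of_eq_gcd_mul_left hbpos (by convert hb using 2 <;> ring)
  have hAN : Nat.Coprime (A * b) (N * a) :=
    Nat.coprime_of_eq_gcd_mul_left hnpos (by convert hn using 2 <;> ring)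
  have hperiod : aoiBasic (A * b * n) (B * a * b) (N * a * n) (a * B * N)
      = aoiBasic (A * b * n) (B * a * b) (N * a * n) 0 := by
    rw [aoiBasic_eq_zero ⟨A * n * N, by push_cast; ring⟩ ⟨A * b * B, by push_cast; ring⟩,
      aoiBasic_eq_zero (by simp) (by simp)]
  have hfloor (i : ℕ) : ⌊(i : ℚ) * b / a⌋ = (i : ℤ) * b / a := by
    rw [← Rat.floor_intCast_div_natCast]
    push_cast
    rfl
  have key := congrArg (Int.cast : ℤ → ℚ) <|
    two_mul_sum_range_aoiBasic hB hapos hbpos hnpos hBN hAB hAN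
  rw [← card_filter_mul_div_lt hapos hbpos (Nat.mod_lt N hbpos).le, Rat.floor_natCast_div_natCast]
  simp only [hfloor, ← sum_div, ← Int.cast_sum]
  rw [sum_Icc_one_eq_sum_range hperiod]
  field_simp
  push_cast at key ⊢
  linear_combination key

/-- Equation (11): the exact mean Age-of-Information of the basic model
over one period. -/
theorem stmt6 (A B N a b n : ℕ) (hA : 0 < A) (hB : 0 < B) (hN : 0 < N)
    (hapos : 0 < a) (hbpos : 0 < b) (hnpos : 0 < n)
    (ha : a = Nat.gcd (B * a * b) (N * a * n))
    (hb : b = Nat.gcd (A * b * n) (B * a * b))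
    (hn : n = Nat.gcd (A * b * n) (N * a * n)) :
    (1 / ((a : ℚ) * B * N)) *
        ∑ k ∈ Finset.Icc 1 (a * B * N),
          ((aoiBasic (A * b * n : ℤ) (B * a * b : ℤ) (N * a * n : ℤ) k : ℤ) : ℚ) =
      ((B : ℚ) * a * b + (N : ℚ) * a * n - n + (a : ℚ) * b) / 2 -
        ((b : ℚ) / N) *
          (((a : ℚ) * ((b : ℚ) + 1) / 2) * (⌊(N : ℚ) / (b : ℚ)⌋ : ℚ) +
            (⌈((N % b : ℕ) : ℚ) * (a : ℚ) / (b : ℚ)⌉ : ℚ) +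
            ∑ i ∈ Finset.range a, ∑ j ∈ Finset.range (N % b),
              (((((j : ℤ) - ⌊(i : ℚ) * (b : ℚ) / (a : ℚ)⌋) * (n : ℤ)) % (b : ℤ) : ℤ) : ℚ) /
                (b : ℚ)) :=
  stmt6_general A B N a b n hB hN hapos hbpos hnpos ha hb hn
end

section
/- In the basic model, the largest occurring Age-of-Information value is bounded by α_k ≤ B' + N' − n for every k ≥ 0. -/
theorem Int.emod_le_sub_of_dvd {x m n : ℤ} (hm : 0 < m) (hx : n ∣ x) (hnm : n ∣ m) :
    x % m ≤ m - n := by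
  have hdvd : n ∣ m - x % m := dvd_sub hnm ((EuclideanDomain.dvd_mod_iff hnm).mpr hx)
  have hpos : 0 < m - x % m := sub_pos.mpr (Int.emod_lt_of_pos x hm)
  linarith [Int.le_of_dvd hpos hdvd]

theorem aoiBasic_le_of_dvd {A' B' N' n : ℤ} (hB' : 0 < B') (hN' : 0 < N')
    (hnA' : n ∣ A') (hnN' : n ∣ N') (k : ℕ) :
    aoiBasic A' B' N' k ≤ B' + N' - n - 1 := by
  have hfirst := Int.emod_le_sub_of_dvd hN' (hnA'.mul_left k) hnN'
  have hsecond := Int.emod_lt_of_pos ((k * A') % B' - (k * A') % N') hB'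
  unfold aoiBasic
  omega

theorem stmt9_general (A B N a b n : ℕ) (hB : 0 < B) (hN : 0 < N)
    (hapos : 0 < a) (hbpos : 0 < b) (hnpos : 0 < n) :
    ∀ k : ℕ,
      aoiBasic (A * b * n : ℤ) (B * a * b : ℤ) (N * a * n : ℤ) k ≤
        (B : ℤ) * a * b + (N : ℤ) * a * n - n := by
  intro k
  have hB' : (0 : ℤ) < B * a * b := by positivity
  have hN' : (0 : ℤ) < N * a * n := by positivity
  have := aoiBasic_le_of_dvd hB' hN' (dvd_mul_left (n : ℤ) (A * b))
    (dvd_mul_left (n : ℤ) (N * a)) k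
  linarith

/-- Corollary 1, eq. (14): in the basic model the AoI is bounded by
`B' + N' − n` for every `k`. -/
theorem stmt9 (A B N a b n : ℕ) (hA : 0 < A) (hB : 0 < B) (hN : 0 < N)
    (hapos : 0 < a) (hbpos : 0 < b) (hnpos : 0 < n)
    (ha : a = Nat.gcd (B * a * b) (N * a * n))
    (hb : b = Nat.gcd (A * b * n) (B * a * b))
    (hn : n = Nat.gcd (A * b * n) (N * a * n)) :
    ∀ k : ℕ,
      aoiBasic (A * b * n : ℤ) (B * a * b : ℤ) (N * a * n : ℤ) k ≤
        (B : ℤ) * a * b + (N : ℤ) * a * n - n :=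
  stmt9_general A B N a b n hB hN hapos hbpos hnpos
end

section
/- In the basic model, the average of the starting points c_{ij} is sandwiched as follows: n·(a·N − 1)/2 ≤ (1/(a·N))·Σ_{i=0}^{a−1} Σ_{j=0}^{N−1} c_{ij} ≤ n·(a·N − 1)/2 + a·b. -/
/-!
With `r = i·A' % (a·b)`, `s = i·A' % (a·n)` and `x = s - r + j·a·n`, the identity
`m·⌈x/m⌉ = x + (-x) % m` gives `c_{ij} = s + j·a·n + e_{ij}` with `0 ≤ e_{ij} < a·b`.
Since `n = gcd(A', N')` makes `A·b` coprime to `a`, the residues `s = (i·A·b % a)·n` run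
through `0, n, …, (a-1)·n` as `i` does, so the values `s + j·a·n` sum to `n·aN(aN-1)/2`,
while the errors `e_{ij}` add up to less than `aN·ab`.
-/

open Finset

theorem Int.natCast_mul_ceil_intCast_div_natCast {k : Type*} [Field k] [LinearOrder k]
    [IsStrictOrderedRing k] [FloorRing k] (x : ℤ) (m : ℕ) :
    (m : ℤ) * ⌈(x : k) / m⌉ = x + -x % m := by
  rw [← neg_neg ⌈_⌉, ← Int.floor_neg, ← neg_div, ← Int.cast_neg, Int.floor_div_natCast,
    Int.floor_intCast]
  linarith [Int.mul_ediv_add_emod (-x) m]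

theorem Nat.sum_range_mul_mod_of_coprime {a k : ℕ} (h : k.Coprime a) :
    ∑ i ∈ range a, i * k % a = ∑ i ∈ range a, i := by
  have hinj : Set.InjOn (fun i => i * k % a) (range a) := fun i hi j hj hij =>
    Nat.ModEq.eq_of_lt_of_lt (Nat.ModEq.cancel_right_of_coprime (Nat.coprime_comm.mp h) hij)
      (mem_range.mp hi) (mem_range.mp hj)
  have himage : (range a).image (fun i => i * k % a) = range a :=
    eq_of_subset_of_card_le
      (image_subset_iff.mpr fun i hi =>
        mem_range.mpr (Nat.mod_lt _ (Nat.zero_lt_of_lt (mem_range.mp hi))))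
      (Finset.card_image_of_injOn hinj).ge
  conv_rhs => rw [← himage]
  exact (sum_image (f := fun i => i) hinj).symm

theorem Finset.two_mul_sum_range_intCast (n : ℕ) :
    2 * ∑ i ∈ range n, (i : ℤ) = n * (n - 1) := by
  induction n with
  | zero => simp
  | succ n ih => rw [sum_range_succ, mul_add, ih]; push_cast; ring

theorem cBasic_eq (A' a b n i j : ℕ) :
    cBasic A' a b n i j = i * A' % (a * n) + j * a * n
      + (i * A' % (a * b) - i * A' % (a * n) - j * a * n) % (a * b) := by
  have h := Int.natCast_mul_ceil_intCast_div_natCast (k := ℚ)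
    ((i : ℤ) * A' % (a * n) - i * A' % (a * b) + j * a * n) (a * b)
  simp only [Nat.cast_mul] at h
  rw [cBasic, h]
  ring_nf

def cBase (A' a n i j : ℕ) : ℤ := i * A' % (a * n) + j * a * n

section
variable {A' a b n : ℕ}

theorem cBase_le_cBasic (hab : 0 < a * b) (i j : ℕ) :
    cBase A' a n i j ≤ cBasic A' a b n i j := by
  rw [cBasic_eq, cBase]
  have := Int.emod_nonneg (i * A' % (a * b) - i * A' % (a * n) - j * a * n : ℤ)
    (by exact_mod_cast hab.ne' : (a * b : ℤ) ≠ 0)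
  linarith

theorem cBasic_le_cBase_add (hab : 0 < a * b) (i j : ℕ) :
    cBasic A' a b n i j ≤ cBase A' a n i j + a * b := by
  rw [cBasic_eq, cBase]
  have := Int.emod_lt_of_pos (i * A' % (a * b) - i * A' % (a * n) - j * a * n : ℤ)
    (by exact_mod_cast hab : (0 : ℤ) < a * b)
  linarith

end

theorem two_mul_sum_cBase {c a : ℕ} (h : c.Coprime a) (n N : ℕ) :
    2 * ∑ i ∈ range a, ∑ j ∈ range N, cBase (c * n) a n i j =
      n * (a * N) * (a * N - 1) := by
  have hres (i : ℕ) :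
      (i : ℤ) * ((c * n : ℕ) : ℤ) % (a * n) = ((i * c % a : ℕ) : ℤ) * n := by
    push_cast
    rw [← mul_assoc]
    exact_mod_cast Nat.mul_mod_mul_right n (i * c) a
  have hperm : ∑ i ∈ range a, ((i * c % a : ℕ) : ℤ) = ∑ i ∈ range a, (i : ℤ) := by
    rw [← Nat.cast_sum, Nat.sum_range_mul_mod_of_coprime h, Nat.cast_sum]
  simp only [cBase, hres, sum_add_distrib, sum_const, card_range, nsmul_eq_mul, ← sum_mul,
    ← mul_sum, hperm]
  linear_combination (N * n : ℤ) * two_mul_sum_range_intCast a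
    + (a * a * n : ℤ) * two_mul_sum_range_intCast N

theorem Nat.coprime_of_eq_gcd_mul_right {x y n : ℕ} (hn : 0 < n)
    (h : n = Nat.gcd (x * n) (y * n)) : x.Coprime y := by
  rw [Nat.gcd_mul_right] at h
  exact Nat.eq_of_mul_eq_mul_right hn (by rw [one_mul, ← h])

theorem stmt12_general (A N a b n : ℕ) (hN : 0 < N)
    (hapos : 0 < a) (hbpos : 0 < b) (hnpos : 0 < n)
    (hn : n = Nat.gcd (A * b * n) (N * a * n)) :
    (n : ℚ) * ((a : ℚ) * N - 1) / 2 ≤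
        (1 / ((a : ℚ) * N)) *
          ∑ i ∈ Finset.range a, ∑ j ∈ Finset.range N,
            ((cBasic (A * b * n) a b n i j : ℤ) : ℚ) ∧
      (1 / ((a : ℚ) * N)) *
          ∑ i ∈ Finset.range a, ∑ j ∈ Finset.range N,
            ((cBasic (A * b * n) a b n i j : ℤ) : ℚ) ≤
        (n : ℚ) * ((a : ℚ) * N - 1) / 2 + (a : ℚ) * b := by
  have hcop : (A * b).Coprime a :=
    (Nat.coprime_of_eq_gcd_mul_right hnpos hn).coprime_dvd_right (dvd_mul_left a N)
  have hab : 0 < a * b := Nat.mul_pos hapos hbpos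
  set S := ∑ i ∈ range a, ∑ j ∈ range N, cBasic (A * b * n) a b n i j with hS
  set T := ∑ i ∈ range a, ∑ j ∈ range N, cBase (A * b * n) a n i j
  have hT : 2 * T = n * (a * N) * (a * N - 1) := two_mul_sum_cBase hcop n N
  have hTS : T ≤ S := sum_le_sum fun i _ => sum_le_sum fun j _ => cBase_le_cBasic hab i j
  have hST : S ≤ T + a * N * (a * b) :=
    calc S ≤ ∑ i ∈ range a, ∑ j ∈ range N, (cBase (A * b * n) a n i j + a * b) :=
          sum_le_sum fun i _ => sum_le_sum fun j _ => cBasic_le_cBase_add hab i j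
      _ = T + a * N * (a * b) := by
          simp only [sum_add_distrib, sum_const, card_range, nsmul_eq_mul]
          ring
  have hcast :
      ∑ i ∈ range a, ∑ j ∈ range N, ((cBasic (A * b * n) a b n i j : ℤ) : ℚ) = S := by
    simp only [hS, Int.cast_sum]
  have haN : (0 : ℚ) < a * N := by positivity
  rw [hcast, one_div_mul_eq_div, le_div_iff₀ haN, div_le_iff₀ haN]
  qify at hT hTS hST
  constructor <;> linarith

/-- In the basic model, the average of the starting points `c_{ij}` is
sandwiched between `n·(a·N − 1)/2` and `n·(a·N − 1)/2 + a·b`. -/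
theorem stmt12 (A B N a b n : ℕ) (hA : 0 < A) (hB : 0 < B) (hN : 0 < N)
    (hapos : 0 < a) (hbpos : 0 < b) (hnpos : 0 < n)
    (ha : a = Nat.gcd (B * a * b) (N * a * n))
    (hb : b = Nat.gcd (A * b * n) (B * a * b))
    (hn : n = Nat.gcd (A * b * n) (N * a * n)) :
    (n : ℚ) * ((a : ℚ) * N - 1) / 2 ≤
        (1 / ((a : ℚ) * N)) *
          ∑ i ∈ Finset.range a, ∑ j ∈ Finset.range N,
            ((cBasic (A * b * n) a b n i j : ℤ) : ℚ) ∧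
      (1 / ((a : ℚ) * N)) *
          ∑ i ∈ Finset.range a, ∑ j ∈ Finset.range N,
            ((cBasic (A * b * n) a b n i j : ℤ) : ℚ) ≤
        (n : ℚ) * ((a : ℚ) * N - 1) / 2 + (a : ℚ) * b :=
  stmt12_general A N a b n hN hapos hbpos hnpos hn
end

section
/- In the extended model, for every fixed l ≥ 0 and every k ≥ 0, the l-failure Age-of-Information is bounded by α^{[l]}_k ≤ B' + N' − n + K + l·N'. -/
/-- The `l`-failure Age-of-Information sequence of the extended model. -/
def aoiExt (A' B' N' ΔB ΔN : ℤ) (l k : ℕ) : ℤ :=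
  2 + (l : ℤ) * N' + ((k : ℤ) * A' - ΔN - 1) % N' +
    (((k : ℤ) * A' - ΔB - 2 - (l : ℤ) * N') % B' -
      ((k : ℤ) * A' - ΔN - 1) % N') % B'

/-- The constant `K = 2 + (Δ_N + 1) %̄ n` where `x %̄ m = ⌈x/m⌉·m − x`. -/
def extK (ΔN n : ℕ) : ℤ :=
  2 + (⌈(((ΔN : ℚ) + 1)) / (n : ℚ)⌉ * n - ((ΔN : ℤ) + 1))

/-!
The second residue in `aoiExt` is at most `B' - 1`. The first, `r = (k A' - Δ_N - 1) % N'`, is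
congruent modulo `n` to `-(Δ_N + 1)`, because `n` divides both `A'` and `N'`. Hence
`r - (-(Δ_N + 1)) % n` is a multiple of `n` below `N'`, so it is at most `N' - n`; and
`(-(Δ_N + 1)) % n = K - 2` is the ceiling expression in `extK`.
-/

lemma extK_eq (ΔN n : ℕ) : extK ΔN n = 2 + (-(ΔN + 1 : ℤ)) % n := by
  have hceil : ⌈((ΔN : ℚ) + 1) / n⌉ = -((-(ΔN + 1 : ℤ)) / n) := by
    have := Rat.ceil_intCast_div_natCast (ΔN + 1) n
    push_cast at this
    exact this
  rw [extK, hceil, Int.emod_def]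
  ring

lemma Int.emod_le_sub_add_emod_of_dvd {n M : ℤ} (x : ℤ) (hn : 0 < n) (hM : 0 < M)
    (hnM : n ∣ M) : x % M ≤ M - n + x % n := by
  have hlt : x % M - x % n < M := by
    linarith [Int.emod_lt_of_pos x hM, Int.emod_nonneg x hn.ne']
  have hdvd : n ∣ M - (x % M - x % n) := by
    refine dvd_sub hnM ?_
    rw [← Int.emod_emod_of_dvd x hnM]
    exact Int.dvd_self_sub_emod
  linarith [Int.le_of_dvd (by linarith) hdvd]

lemma aoiExt_le {A' B' N' n : ℤ} (ΔB ΔN : ℤ) (l k : ℕ) (hB' : 0 < B') (hN' : 0 < N')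
    (hn : 0 < n) (hnA' : n ∣ A') (hnN' : n ∣ N') :
    aoiExt A' B' N' ΔB ΔN l k ≤ B' + N' - n + (2 + (-(ΔN + 1)) % n) + l * N' - 1 := by
  have hresidue : ((k : ℤ) * A' - ΔN - 1) % n = (-(ΔN + 1)) % n := by
    obtain ⟨c, hc⟩ := hnA'
    rw [hc, show (k : ℤ) * (n * c) - ΔN - 1 = -(ΔN + 1) + n * (k * c) by ring,
      Int.add_mul_emod_self_left]
  have hfirst := Int.emod_le_sub_add_emod_of_dvd ((k : ℤ) * A' - ΔN - 1) hn hN' hnN'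
  have hsecond := Int.emod_lt_of_pos
    (((k : ℤ) * A' - ΔB - 2 - l * N') % B' - ((k : ℤ) * A' - ΔN - 1) % N') hB'
  rw [aoiExt]
  linarith

theorem stmt14_general (A B N a b n : ℕ) (hB : 0 < B) (hN : 0 < N)
    (hapos : 0 < a) (hbpos : 0 < b) (hnpos : 0 < n)
    (ΔB ΔN : ℕ) (l : ℕ) :
    ∀ k : ℕ,
      aoiExt (A * b * n : ℤ) (B * a * b : ℤ) (N * a * n : ℤ) (ΔB : ℤ) (ΔN : ℤ) l k ≤
        (B : ℤ) * a * b + (N : ℤ) * a * n - n + extK ΔN n + (l : ℤ) * ((N : ℤ) * a * n) := by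
  intro k
  have h := aoiExt_le (ΔB : ℤ) (ΔN : ℤ) l k (by positivity : (0 : ℤ) < B * a * b)
    (by positivity : (0 : ℤ) < N * a * n) (by positivity : (0 : ℤ) < n)
    (Dvd.intro_left _ rfl : (n : ℤ) ∣ A * b * n) (Dvd.intro_left _ rfl : (n : ℤ) ∣ N * a * n)
  rw [extK_eq]
  linarith

/-- In the extended model, for every fixed `l` and every `k`, the `l`-failure
AoI is bounded by `B' + N' − n + K + l·N'`. -/
theorem stmt14 (A B N a b n : ℕ) (hA : 0 < A) (hB : 0 < B) (hN : 0 < N)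
    (hapos : 0 < a) (hbpos : 0 < b) (hnpos : 0 < n)
    (ha : a = Nat.gcd (B * a * b) (N * a * n))
    (hb : b = Nat.gcd (A * b * n) (B * a * b))
    (hn : n = Nat.gcd (A * b * n) (N * a * n))
    (ΔB ΔN : ℕ) (l : ℕ) :
    ∀ k : ℕ,
      aoiExt (A * b * n : ℤ) (B * a * b : ℤ) (N * a * n : ℤ) (ΔB : ℤ) (ΔN : ℤ) l k ≤
        (B : ℤ) * a * b + (N : ℤ) * a * n - n + extK ΔN n + (l : ℤ) * ((N : ℤ) * a * n) :=
  stmt14_general A B N a b n hB hN hapos hbpos hnpos ΔB ΔN l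
end

section
/- Let a, b, n, N be positive integers with gcd(n, b) = 1. Then Σ_{i=0}^{a−1} Σ_{j=0}^{N−1} ⌈( ((j − ⌊i·b/a⌋)·n) % b ) / b⌉ = a·N − a·⌊N/b⌋ − ⌈(N % b)·a/b⌉, where the inner ⌈·⌉ and the outer ⌈·⌉ are ceilings of rational numbers. -/
/-!
By coprimality of `n` and `b`, the summand for `(i, j)` is `0` when `j ≡ cᵢ [MOD b]` and `1`
otherwise, where `cᵢ = ⌊i b / a⌋ = i * b / a < b`. Among `j < N` exactly
`N / b + [cᵢ < N % b]` lie in the class of `cᵢ`, and `cᵢ < m` holds for exactly `⌈m a / b⌉`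
indices `i < a` as long as `m ≤ b`; summing over `i` with `m = N % b` gives the formula.
-/

open Finset

lemma Rat.floor_natCast_mul_div_natCast (i b a : ℕ) :
    ⌊(i : ℚ) * b / a⌋ = ((i * b / a : ℕ) : ℤ) := by
  rw [← Nat.cast_mul, Rat.floor_natCast_div_natCast, Int.natCast_div]

lemma Int.ceil_emod_div_eq_ite {K : Type*} [Field K] [LinearOrder K] [IsStrictOrderedRing K]
    [FloorRing K] {b : ℕ} (hb : 0 < b) (x : ℤ) :
    ⌈((x % b : ℤ) : K) / b⌉ = if (b : ℤ) ∣ x then 0 else 1 := by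
  have hbK : (0 : K) < b := by exact_mod_cast hb
  split_ifs with hdvd
  · simp [Int.emod_eq_zero_of_dvd hdvd]
  · have hpos : 0 < x % b := (Int.emod_nonneg x (by omega)).lt_of_ne
      fun h ↦ hdvd (Int.dvd_of_emod_eq_zero h.symm)
    have hlt : x % b < b := Int.emod_lt_of_pos x (by omega)
    rw [Int.ceil_eq_iff, Int.cast_one, sub_self, div_pos_iff_of_pos_right hbK,
      div_le_one hbK]
    exact ⟨by exact_mod_cast hpos, by exact_mod_cast hlt.le⟩

lemma card_filter_range_modEq {b c : ℕ} (hb : 0 < b) (hc : c < b) (N : ℕ) :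
    #{j ∈ range N | c ≡ j [MOD b]} = N / b + if c < N % b then 1 else 0 := by
  simp_rw [Nat.ModEq.comm (a := c), ← Nat.count_eq_card_filter_range,
    Nat.count_modEq_card N hb, Nat.mod_eq_of_lt hc]

lemma card_filter_range_div_lt {a b m : ℕ} (ha : 0 < a) (hb : 0 < b) (hm : m ≤ b) :
    #{i ∈ range a | i * b / a < m} = ⌈(m : ℚ) * a / b⌉₊ := by
  have hbQ : (0 : ℚ) < b := by exact_mod_cast hb
  have hiff (i : ℕ) : i * b / a < m ↔ i < ⌈(m : ℚ) * a / b⌉₊ := by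
    rw [Nat.div_lt_iff_lt_mul ha, Nat.lt_ceil, lt_div_iff₀ hbQ]
    exact_mod_cast Iff.rfl
  have hle : ⌈(m : ℚ) * a / b⌉₊ ≤ a := by
    rw [Nat.ceil_le, div_le_iff₀ hbQ, mul_comm]
    exact mul_le_mul_of_nonneg_left (by exact_mod_cast hm) (by positivity)
  have hfilter : {i ∈ range a | i < ⌈(m : ℚ) * a / b⌉₊} = range ⌈(m : ℚ) * a / b⌉₊ := by
    ext i
    simp only [mem_filter, mem_range]
    omega
  rw [filter_congr fun i _ ↦ hiff i, hfilter, card_range]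

lemma sum_range_ceil_mul_emod_div {b n c : ℕ} (hb : 0 < b) (hnb : Nat.Coprime n b) (hc : c < b)
    (N : ℕ) :
    ∑ j ∈ range N, ⌈((((j : ℤ) - c) * n % b : ℤ) : ℚ) / b⌉ =
      N - (N / b + if c < N % b then 1 else 0 : ℕ) := by
  have hterm (j : ℕ) :
      ⌈((((j : ℤ) - c) * n % b : ℤ) : ℚ) / b⌉ = 1 - if c ≡ j [MOD b] then 1 else 0 := by
    have hdvd : (b : ℤ) ∣ ((j : ℤ) - c) * n ↔ c ≡ j [MOD b] := by
      rw [Nat.modEq_iff_dvd]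
      exact ⟨(Nat.isCoprime_iff_coprime.mpr hnb.symm).dvd_of_dvd_mul_right, (·.mul_right _)⟩
    rw [Int.ceil_emod_div_eq_ite hb]
    split_ifs <;> simp_all
  rw [sum_congr rfl fun j _ ↦ hterm j, sum_sub_distrib, sum_boole, card_filter_range_modEq hb hc]
  simp

theorem stmt17_general (a b n N : ℕ) (hapos : 0 < a) (hbpos : 0 < b)
    (h : Nat.gcd n b = 1) :
    (∑ i ∈ Finset.range a, ∑ j ∈ Finset.range N,
        ⌈((((((j : ℤ) - ⌊(i : ℚ) * (b : ℚ) / (a : ℚ)⌋) * (n : ℤ)) % (b : ℤ)) : ℤ) : ℚ) /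
          (b : ℚ)⌉) =
      (a : ℤ) * N - (a : ℤ) * ⌊(N : ℚ) / (b : ℚ)⌋ -
        ⌈((N % b : ℕ) : ℚ) * (a : ℚ) / (b : ℚ)⌉ := by
  have hdiv_lt (i : ℕ) (hi : i ∈ range a) : i * b / a < b :=
    Nat.div_lt_of_lt_mul (Nat.mul_lt_mul_of_pos_right (mem_range.mp hi) hbpos)
  simp_rw [Rat.floor_natCast_mul_div_natCast]
  rw [sum_congr rfl fun i hi ↦ sum_range_ceil_mul_emod_div hbpos h (hdiv_lt i hi) N]
  push_cast
  rw [sum_sub_distrib, sum_add_distrib, sum_boole, card_filter_range_div_lt hapos hbpos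
    (Nat.mod_lt N hbpos).le, Int.natCast_ceil_eq_ceil (by positivity),
    Rat.floor_natCast_div_natCast, sum_const, sum_const, card_range, nsmul_eq_mul, nsmul_eq_mul]
  ring

/-- Equation (40): for positive `a`, `b`, `n`, `N` with `gcd(n, b) = 1`,
`Σ_{i<a} Σ_{j<N} ⌈(((j − ⌊i·b/a⌋)·n) % b)/b⌉ = a·N − a·⌊N/b⌋ − ⌈(N % b)·a/b⌉`. -/
theorem stmt17 (a b n N : ℕ) (hapos : 0 < a) (hbpos : 0 < b) (hnpos : 0 < n)
    (hNpos : 0 < N) (h : Nat.gcd n b = 1) :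
    (∑ i ∈ Finset.range a, ∑ j ∈ Finset.range N,
        ⌈((((((j : ℤ) - ⌊(i : ℚ) * (b : ℚ) / (a : ℚ)⌋) * (n : ℤ)) % (b : ℤ)) : ℤ) : ℚ) /
          (b : ℚ)⌉) =
      (a : ℤ) * N - (a : ℤ) * ⌊(N : ℚ) / (b : ℚ)⌋ -
        ⌈((N % b : ℕ) : ℚ) * (a : ℚ) / (b : ℚ)⌉ :=
  stmt17_general a b n N hapos hbpos h
end

section
/- Let A, B, a, b, n be positive integers with gcd(n·A, B) = 1, and set A' = A·b·n and B' = B·a·b. Then for every nonnegative integer r, the multiset { ((i·a + r)·A') % B' : i = 1, …, B } equals the multiset { (r·A' % (a·b)) + m·a·b : m = 0, 1, …, B−1 }. -/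
/-!
With `d = a·b` one has `(i·a + r)·A' = d·(i·n·A) + r·A'`, so modulo `d·B` its residue is
`(r·A' % d) + d·((i·n·A + ⌊r·A'/d⌋) % B)`. Since `n·A` is invertible modulo `B`, the inner residues
run through `0, …, B−1` exactly once as `i` runs through `1, …, B`.
-/

namespace Nat

theorem mul_add_mod_mul (d y x B : ℕ) :
    (d * y + x) % (d * B) = x % d + d * ((y + x / d) % B) := by
  rcases Nat.eq_zero_or_pos d with rfl | hd
  · simp
  rw [Nat.mod_mul, Nat.mul_add_mod, Nat.mul_add_div hd]

theorem multiset_Ico_map_mul_add_mod {k B : ℕ} (hk : Coprime k B) (c q : ℕ) :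
    (Multiset.Ico c (c + B)).map (fun i => (i * k + q) % B) = Multiset.range B := by
  have hinj : Set.InjOn (fun i => (i * k + q) % B) (Finset.Ico c (c + B)) := by
    intro i hi j hj hij
    have hij' : i * k ≡ j * k [MOD B] := Nat.ModEq.add_right_cancel' q hij
    exact mod_injOn_Ico c B hi hj (hij'.cancel_right_of_coprime hk.symm)
  have hnodup := (Finset.Ico c (c + B)).nodup.map_on fun i hi j hj => @hinj i hi j hj
  refine Multiset.eq_of_le_of_card_le ((Multiset.le_iff_subset hnodup).2 ?_)
    (by simp [Multiset.Ico])
  intro m hm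
  obtain ⟨i, hi, rfl⟩ := Multiset.mem_map.1 hm
  have hB : 0 < B := by rw [Finset.mem_val, Finset.mem_Ico] at hi; omega
  exact Multiset.mem_range.2 (Nat.mod_lt _ hB)

theorem multiset_Icc_map_mul_add_mod_mul {k B : ℕ} (hk : Coprime k B) (d x : ℕ) :
    (Finset.Icc 1 B).val.map (fun i => (d * (i * k) + x) % (d * B)) =
      (Multiset.range B).map (fun m => x % d + m * d) := by
  have hIcc : (Finset.Icc 1 B).val = Multiset.Ico 1 (1 + B) := by
    rw [add_comm, ← Finset.Ico_add_one_right_eq_Icc]; rfl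
  simp only [mul_add_mod_mul, hIcc]
  rw [← multiset_Ico_map_mul_add_mod hk 1 (x / d), Multiset.map_map]
  exact Multiset.map_congr rfl fun i _ => by simp only [Function.comp_apply]; ring

end Nat

theorem stmt19_general (A B a b n : ℕ)
    (h : Nat.gcd (n * A) B = 1) (r : ℕ) :
    (Finset.Icc 1 B).val.map
        (fun i => (((i : ℤ) * a + r) * ((A : ℤ) * b * n)) % ((B : ℤ) * a * b)) =
      (Multiset.range B).map
        (fun m => ((r : ℤ) * ((A : ℤ) * b * n)) % ((a : ℤ) * b) +
          (m : ℤ) * ((a : ℤ) * b)) := by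
  have key := congrArg (Multiset.map ((↑) : ℕ → ℤ))
    (Nat.multiset_Icc_map_mul_add_mod_mul h (a * b) (r * (A * b * n)))
  simp only [Multiset.pure_def, Multiset.bind_def, Multiset.bind_singleton, Multiset.map_map]
    at key ⊢
  convert key using 2 <;> simp only [Function.comp_apply] <;> push_cast <;> ring_nf

/-- Equation (34): for positive `A`, `B`, `a`, `b`, `n` with `gcd(n·A, B) = 1`,
`A' = A·b·n` and `B' = B·a·b`, for every `r ≥ 0` the multiset
`{((i·a + r)·A') % B' : i = 1,…,B}` equals the multiset
`{(r·A' % (a·b)) + m·a·b : m = 0,…,B−1}`. -/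
theorem stmt19 (A B a b n : ℕ) (hA : 0 < A) (hB : 0 < B)
    (hapos : 0 < a) (hbpos : 0 < b) (hnpos : 0 < n)
    (h : Nat.gcd (n * A) B = 1) (r : ℕ) :
    (Finset.Icc 1 B).val.map
        (fun i => (((i : ℤ) * a + r) * ((A : ℤ) * b * n)) % ((B : ℤ) * a * b)) =
      (Multiset.range B).map
        (fun m => ((r : ℤ) * ((A : ℤ) * b * n)) % ((a : ℤ) * b) +
          (m : ℤ) * ((a : ℤ) * b)) :=
  stmt19_general A B a b n h r
end
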